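/- arXiv:1805.09873 — 3 statements merged into one kernel-verified Lean document; each statement's English description precedes it below -/
import Mathlib

section
/- Fix x₁ < ⋯ < x_n and an index k⁰ with x_{k⁰} = 0. The set of vectors (r(x₁),…,r(x_n)) as r ranges over concave piecewise affine functions with kinks only at the x_i satisfying r(0) = 0 is the convex cone generated by ±(x_j − 0)_{j=1}^n, the vectors ((x_j − x_i)1{i ≥ j})_{j=1}^n for i = 2,…,k⁰, and the vectors ((x_i − x_j)1{i ≤ j})_{j=1}^n for i = k⁰+1,…,n−1. -/
private lemma aux_affine_concave {S : Set ℝ} (hS : Convex ℝ S) (a : ℝ) :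
    ConcaveOn ℝ S (fun t => a * t) := by
  refine ⟨hS, fun u _ v _ p q hp hq hpq => ?_⟩
  simp only [smul_eq_mul]
  apply le_of_eq; ring

private lemma aux_min_left {S : Set ℝ} (hS : Convex ℝ S) (c : ℝ) :
    ConcaveOn ℝ S (fun t => min (t - c) 0) := by
  refine ⟨hS, fun u _ v _ p q hp hq hpq => ?_⟩
  simp only [smul_eq_mul]
  refine le_min ?_ ?_
  · have h1 : p * min (u - c) 0 ≤ p * (u - c) :=
      mul_le_mul_of_nonneg_left (min_le_left _ _) hp
    have h2 : q * min (v - c) 0 ≤ q * (v - c) :=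
      mul_le_mul_of_nonneg_left (min_le_left _ _) hq
    have h3 : p * (u - c) + q * (v - c) = p * u + q * v - c := by
      linear_combination (-c) * hpq
    linarith
  · have h1 : p * min (u - c) 0 ≤ p * 0 :=
      mul_le_mul_of_nonneg_left (min_le_right _ _) hp
    have h2 : q * min (v - c) 0 ≤ q * 0 :=
      mul_le_mul_of_nonneg_left (min_le_right _ _) hq
    have h3 : p * (0:ℝ) = 0 := mul_zero p
    have h4 : q * (0:ℝ) = 0 := mul_zero q
    linarith

private lemma aux_min_right {S : Set ℝ} (hS : Convex ℝ S) (c : ℝ) :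
    ConcaveOn ℝ S (fun t => min (c - t) 0) := by
  refine ⟨hS, fun u _ v _ p q hp hq hpq => ?_⟩
  simp only [smul_eq_mul]
  refine le_min ?_ ?_
  · have h1 : p * min (c - u) 0 ≤ p * (c - u) :=
      mul_le_mul_of_nonneg_left (min_le_left _ _) hp
    have h2 : q * min (c - v) 0 ≤ q * (c - v) :=
      mul_le_mul_of_nonneg_left (min_le_left _ _) hq
    have h3 : p * (c - u) + q * (c - v) = c - (p * u + q * v) := by
      linear_combination c * hpq
    linarith
  · have h1 : p * min (c - u) 0 ≤ p * 0 :=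
      mul_le_mul_of_nonneg_left (min_le_right _ _) hp
    have h2 : q * min (c - v) 0 ≤ q * 0 :=
      mul_le_mul_of_nonneg_left (min_le_right _ _) hq
    have h3 : p * (0:ℝ) = 0 := mul_zero p
    have h4 : q * (0:ℝ) = 0 := mul_zero q
    linarith

private lemma aux_smul_concave {S : Set ℝ} {f : ℝ → ℝ} {c : ℝ} (hc : 0 ≤ c)
    (hf : ConcaveOn ℝ S f) : ConcaveOn ℝ S (fun t => c * f t) :=
  hf.smul hc

private lemma aux_concaveOn_sum {S : Set ℝ} (hS : Convex ℝ S) {ι : Type*} (s : Finset ι)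
    (f : ι → ℝ → ℝ) (h : ∀ i ∈ s, ConcaveOn ℝ S (f i)) :
    ConcaveOn ℝ S (fun t => ∑ i ∈ s, f i t) := by
  classical
  induction s using Finset.induction with
  | empty => simpa using concaveOn_const 0 hS
  | @insert a s ha ih =>
      simp only [Finset.sum_insert ha]
      exact (h _ (Finset.mem_insert_self _ _)).add
        (ih fun i hi' => h i (Finset.mem_insert_of_mem hi'))

private lemma aux_sum_ite_zero {n : ℕ} (w : Fin n → ℝ) (a b : ℕ) (h : b ≤ a) :
    ∑ i : Fin n, (if a < (i : ℕ) ∧ (i : ℕ) ≤ b then w i else 0) = 0 :=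
  Finset.sum_eq_zero fun i _ => if_neg (by omega)

private lemma aux_sum_ite {n : ℕ} (w : Fin n → ℝ) (σ : ℕ → ℝ)
    (hw : ∀ i : Fin n, 1 ≤ (i : ℕ) → w i = σ ((i : ℕ) - 1) - σ (i : ℕ)) :
    ∀ a b : ℕ, a ≤ b → b < n →
      ∑ i : Fin n, (if a < (i : ℕ) ∧ (i : ℕ) ≤ b then w i else 0) = σ a - σ b := by
  intro a b hab
  induction b, hab using Nat.le_induction with
  | base =>
      intro _
      rw [Finset.sum_eq_zero fun i _ => if_neg (by omega)]; ring
  | succ b hab ih =>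
      intro hb
      have hbn : b < n := by omega
      have key : ∀ i : Fin n, (if a < (i:ℕ) ∧ (i:ℕ) ≤ b + 1 then w i else 0)
          = (if a < (i:ℕ) ∧ (i:ℕ) ≤ b then w i else 0)
            + (if i = ⟨b+1, hb⟩ then w i else 0) := by
        intro i
        by_cases h2 : (i:ℕ) = b + 1
        · have hi : i = ⟨b+1, hb⟩ := Fin.ext h2
          rw [if_pos (by omega), if_neg (by omega), if_pos hi]; ring
        · have hi : i ≠ ⟨b+1, hb⟩ := fun h => h2 (by rw [h])
          rw [if_neg hi]
          by_cases h3 : a < (i:ℕ) ∧ (i:ℕ) ≤ b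
          · rw [if_pos h3, if_pos (by omega)]; ring
          · rw [if_neg h3, if_neg (by omega)]; ring
      rw [Finset.sum_congr rfl (fun i _ => key i), Finset.sum_add_distrib, ih hbn,
        Fintype.sum_ite_eq' (⟨b+1, hb⟩ : Fin n) w, hw ⟨b+1, hb⟩ (by simp)]
      simp only [Fin.val_mk]
      rw [show b + 1 - 1 = b by omega]
      ring
/-- With x₁ < ⋯ < xₙ and x_{k⁰} = 0 (indices 0-based here: k0 plays the role of k⁰−1),
the set of evaluation vectors (r(x₁),…,r(xₙ)) of concave piecewise affine functions r
with kinks only at the xᵢ and r(0) = 0 equals the convex cone generated by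
±(x_j)_j, ((x_j − x_i)1{i ≥ j})_j for i = 2,…,k⁰, and ((x_i − x_j)1{i ≤ j})_j
for i = k⁰+1,…,n−1. -/
theorem stmt_6 (n : ℕ) (hn : 2 ≤ n) (x : Fin n → ℝ) (hx : StrictMono x)
    (k0 : Fin n) (hk0 : x k0 = 0) :
    {v : Fin n → ℝ | ∃ r : ℝ → ℝ,
        ConcaveOn ℝ (Set.Icc (x ⟨0, by omega⟩) (x ⟨n - 1, by omega⟩)) r ∧
        (∀ i : Fin (n - 1), ∃ a b : ℝ,
          ∀ t ∈ Set.Icc (x ⟨(i : ℕ), by omega⟩) (x ⟨(i : ℕ) + 1, by omega⟩),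
            r t = a * t + b) ∧
        r 0 = 0 ∧
        v = fun j => r (x j)}
    =
    {v : Fin n → ℝ | ∃ (lp lm : ℝ) (w : Fin n → ℝ),
        0 ≤ lp ∧ 0 ≤ lm ∧ (∀ i, 0 ≤ w i) ∧
        v = fun j =>
          lp * x j + lm * (-(x j)) +
            ∑ i : Fin n,
              w i *
                (if 1 ≤ (i : ℕ) ∧ (i : ℕ) ≤ (k0 : ℕ) then
                    (if (j : ℕ) ≤ (i : ℕ) then x j - x i else 0)
                 else if (k0 : ℕ) + 1 ≤ (i : ℕ) ∧ (i : ℕ) ≤ n - 2 then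
                    (if (i : ℕ) ≤ (j : ℕ) then x i - x j else 0)
                 else 0)} := by
  classical
  ext v
  simp only [Set.mem_setOf_eq]
  set k : ℕ := (k0 : ℕ) with hkdef
  have hkn : k < n := by omega
  set X : ℕ → ℝ := fun m => x ⟨min m (n - 1), by omega⟩ with hXdef
  have hXval : ∀ (m : ℕ) (hm : m < n), X m = x ⟨m, hm⟩ := by
    intro m hm
    simp only [hXdef]
    congr 1
    exact Fin.ext (show min m (n - 1) = m by omega)
  have hXx : ∀ j : Fin n, X (j : ℕ) = x j := fun j => hXval _ j.isLt
  have hXmono : ∀ a b : ℕ, a ≤ b → X a ≤ X b := by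
    intro a b h
    simp only [hXdef]
    exact hx.monotone (by simp only [Fin.mk_le_mk]; omega)
  have hXlt : ∀ a b : ℕ, a < b → b ≤ n - 1 → X a < X b := by
    intro a b h hb
    simp only [hXdef]
    exact hx (by simp only [Fin.mk_lt_mk]; omega)
  have hXk : X k = 0 := by
    rw [hXval k hkn, show (⟨k, hkn⟩ : Fin n) = k0 from Fin.ext hkdef]
    exact hk0
  constructor
  · -- LHS ⊆ RHS
    rintro ⟨r, hconc, -, hr0, rfl⟩
    set σ : ℕ → ℝ := fun m =>
      (r (X (min m (n - 2) + 1)) - r (X (min m (n - 2)))) /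
        (X (min m (n - 2) + 1) - X (min m (n - 2))) with hσdef
    have hσeq : ∀ m : ℕ, m ≤ n - 2 →
        σ m = (r (X (m + 1)) - r (X m)) / (X (m + 1) - X m) := by
      intro m hm
      simp only [hσdef]
      rw [show min m (n - 2) = m by omega]
    have hmemX : ∀ m : ℕ, X m ∈ Set.Icc (x ⟨0, by omega⟩) (x ⟨n - 1, by omega⟩) := by
      intro m
      constructor
      · rw [← hXval 0 (by omega)]
        exact hXmono 0 m (Nat.zero_le m)
      · rw [← hXval (n - 1) (by omega)]
        simp only [hXdef]
        exact hx.monotone (by simp only [Fin.mk_le_mk]; omega)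
    have hσanti : Antitone σ := by
      apply antitone_nat_of_succ_le
      intro m
      by_cases hm : m + 1 ≤ n - 2
      · rw [hσeq m (by omega), hσeq (m + 1) hm]
        have h01 : X m < X (m + 1) := hXlt m (m + 1) (by omega) (by omega)
        have h12 : X (m + 1) < X (m + 2) := hXlt (m + 1) (m + 2) (by omega) (by omega)
        exact hconc.slope_anti_adjacent (hmemX m) (hmemX (m + 2)) h01 h12
      · apply le_of_eq
        simp only [hσdef]
        rw [show min (m + 1) (n - 2) = min m (n - 2) by omega]
    have hstep_r : ∀ m : ℕ, m ≤ n - 2 →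
        r (X (m + 1)) - r (X m) = σ m * (X (m + 1) - X m) := by
      intro m hm
      rw [hσeq m hm, div_mul_cancel₀]
      exact sub_ne_zero.mpr (hXlt m (m + 1) (by omega) (by omega)).ne'
    set w : Fin n → ℝ := fun i =>
      if 1 ≤ (i : ℕ) then σ ((i : ℕ) - 1) - σ (i : ℕ) else 0 with hwdef
    have hwfact : ∀ i : Fin n, 1 ≤ (i : ℕ) → w i = σ ((i : ℕ) - 1) - σ (i : ℕ) := by
      intro i h
      simp only [hwdef]
      rw [if_pos h]
    set c : ℝ := σ k with hcdef
    refine ⟨max c 0, max (-c) 0, w, le_max_right _ _, le_max_right _ _, ?_, ?_⟩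
    · intro i
      simp only [hwdef]
      split_ifs with h
      · exact sub_nonneg.mpr (hσanti (by omega))
      · exact le_rfl
    · set F : ℕ → ℝ := fun m => c * X m + ∑ i : Fin n, w i *
        (if 1 ≤ (i : ℕ) ∧ (i : ℕ) ≤ k then (if m ≤ (i : ℕ) then X m - X (i : ℕ) else 0)
         else if k + 1 ≤ (i : ℕ) ∧ (i : ℕ) ≤ n - 2 then
           (if (i : ℕ) ≤ m then X (i : ℕ) - X m else 0)
         else 0) with hFdef
      have step : ∀ m : ℕ, m ≤ n - 2 → F (m + 1) - F m = σ m * (X (m + 1) - X m) := by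
        intro m hm
        have peri : ∀ i : Fin n,
            w i * (if 1 ≤ (i : ℕ) ∧ (i : ℕ) ≤ k then
                (if m + 1 ≤ (i : ℕ) then X (m + 1) - X (i : ℕ) else 0)
              else if k + 1 ≤ (i : ℕ) ∧ (i : ℕ) ≤ n - 2 then
                (if (i : ℕ) ≤ m + 1 then X (i : ℕ) - X (m + 1) else 0)
              else 0)
            - w i * (if 1 ≤ (i : ℕ) ∧ (i : ℕ) ≤ k then
                (if m ≤ (i : ℕ) then X m - X (i : ℕ) else 0)
              else if k + 1 ≤ (i : ℕ) ∧ (i : ℕ) ≤ n - 2 then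
                (if (i : ℕ) ≤ m then X (i : ℕ) - X m else 0)
              else 0)
            = (X (m + 1) - X m) * ((if m < (i : ℕ) ∧ (i : ℕ) ≤ k then w i else 0)
              - (if k < (i : ℕ) ∧ (i : ℕ) ≤ m then w i else 0)) := by
          intro i
          by_cases h1 : 1 ≤ (i : ℕ) ∧ (i : ℕ) ≤ k
          · rw [if_pos h1, if_pos h1,
              if_neg (show ¬(k < (i : ℕ) ∧ (i : ℕ) ≤ m) by omega)]
            by_cases h2 : m + 1 ≤ (i : ℕ)
            · rw [if_pos h2, if_pos (show m ≤ (i : ℕ) by omega),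
                if_pos (show m < (i : ℕ) ∧ (i : ℕ) ≤ k by omega)]; ring
            · rw [if_neg h2, if_neg (show ¬(m < (i : ℕ) ∧ (i : ℕ) ≤ k) by omega)]
              by_cases h3 : m ≤ (i : ℕ)
              · rw [if_pos h3, show (i : ℕ) = m by omega]; ring
              · rw [if_neg h3]; ring
          · rw [if_neg h1, if_neg h1]
            by_cases h2 : k + 1 ≤ (i : ℕ) ∧ (i : ℕ) ≤ n - 2
            · rw [if_pos h2, if_pos h2,
                if_neg (show ¬(m < (i : ℕ) ∧ (i : ℕ) ≤ k) by omega)]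
              by_cases h3 : (i : ℕ) ≤ m
              · rw [if_pos h3, if_pos (show (i : ℕ) ≤ m + 1 by omega),
                  if_pos (show k < (i : ℕ) ∧ (i : ℕ) ≤ m by omega)]; ring
              · rw [if_neg h3, if_neg (show ¬(k < (i : ℕ) ∧ (i : ℕ) ≤ m) by omega)]
                by_cases h4 : (i : ℕ) ≤ m + 1
                · rw [if_pos h4, show (i : ℕ) = m + 1 by omega]; ring
                · rw [if_neg h4]; ring
            · rw [if_neg h2, if_neg h2,
                if_neg (show ¬(m < (i : ℕ) ∧ (i : ℕ) ≤ k) by omega),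
                if_neg (show ¬(k < (i : ℕ) ∧ (i : ℕ) ≤ m) by omega)]; ring
        have hsum : (∑ i : Fin n, w i * (if 1 ≤ (i : ℕ) ∧ (i : ℕ) ≤ k then
                (if m + 1 ≤ (i : ℕ) then X (m + 1) - X (i : ℕ) else 0)
              else if k + 1 ≤ (i : ℕ) ∧ (i : ℕ) ≤ n - 2 then
                (if (i : ℕ) ≤ m + 1 then X (i : ℕ) - X (m + 1) else 0)
              else 0))
            - (∑ i : Fin n, w i * (if 1 ≤ (i : ℕ) ∧ (i : ℕ) ≤ k then
                (if m ≤ (i : ℕ) then X m - X (i : ℕ) else 0)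
              else if k + 1 ≤ (i : ℕ) ∧ (i : ℕ) ≤ n - 2 then
                (if (i : ℕ) ≤ m then X (i : ℕ) - X m else 0)
              else 0))
            = (X (m + 1) - X m) * (σ m - c) := by
          rw [← Finset.sum_sub_distrib, Finset.sum_congr rfl fun i _ => peri i,
            ← Finset.mul_sum, Finset.sum_sub_distrib]
          rcases le_or_gt k m with hkm | hmk
          · rw [aux_sum_ite_zero w m k hkm, aux_sum_ite w σ hwfact k m hkm (by omega),
              hcdef]
            ring
          · rw [aux_sum_ite w σ hwfact m k (by omega) (by omega),
              aux_sum_ite_zero w k m (by omega), hcdef]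
            ring
        simp only [hFdef]
        linear_combination hsum
      have base : F k = 0 := by
        simp only [hFdef]
        rw [hXk, mul_zero, zero_add]
        apply Finset.sum_eq_zero
        intro i _
        by_cases h1 : 1 ≤ (i : ℕ) ∧ (i : ℕ) ≤ k
        · rw [if_pos h1]
          by_cases h2 : k ≤ (i : ℕ)
          · rw [if_pos h2, show (i : ℕ) = k by omega, hXk]; ring
          · rw [if_neg h2, mul_zero]
        · rw [if_neg h1]
          by_cases h2 : k + 1 ≤ (i : ℕ) ∧ (i : ℕ) ≤ n - 2
          · rw [if_pos h2, if_neg (show ¬((i : ℕ) ≤ k) by omega), mul_zero]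
          · rw [if_neg h2, mul_zero]
      have key : ∀ m : ℕ, m ≤ n - 1 → F m = r (X m) := by
        have base' : F k = r (X k) := by rw [hXk, hr0, base]
        have up : ∀ d : ℕ, k + d ≤ n - 1 → F (k + d) = r (X (k + d)) := by
          intro d
          induction d with
          | zero => intro _; exact base'
          | succ d ih =>
              intro hd
              have h1 := step (k + d) (by omega)
              have h2 := hstep_r (k + d) (by omega)
              have h3 := ih (by omega)
              have e : k + (d + 1) = (k + d) + 1 := by omega
              rw [e]
              linarith
        have dn : ∀ d : ℕ, d ≤ k → F (k - d) = r (X (k - d)) := by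
          intro d
          induction d with
          | zero => intro _; exact base'
          | succ d ih =>
              intro hd
              have e : k - d = (k - (d + 1)) + 1 := by omega
              have h1 := step (k - (d + 1)) (by omega)
              have h2 := hstep_r (k - (d + 1)) (by omega)
              have h3 := ih (by omega)
              rw [e] at h3
              linarith
        intro m hm
        rcases le_or_gt k m with h | h
        · have := up (m - k) (by omega)
          rwa [show k + (m - k) = m by omega] at this
        · have := dn (k - m) (by omega)
          rwa [show k - (k - m) = m by omega] at this
      funext j
      have hj : (j : ℕ) ≤ n - 1 := by omega
      rw [← hXx j, ← key (j : ℕ) hj]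
      simp only [hFdef]
      rw [hXx j]
      have hcc : max c 0 * x j + max (-c) 0 * (-(x j)) = c * x j := by
        rcases le_total 0 c with h | h
        · rw [max_eq_left h, max_eq_right (by linarith : -c ≤ 0)]; ring
        · rw [max_eq_right h, max_eq_left (by linarith : (0 : ℝ) ≤ -c)]; ring
      rw [hcc]
      congr 1
      apply Finset.sum_congr rfl
      intro i _
      congr 1
      rw [hXx i]
  · -- RHS ⊆ LHS
    rintro ⟨lp, lm, w, hlp, hlm, hw, rfl⟩
    set φ : Fin n → ℝ → ℝ := fun i t =>
      if 1 ≤ (i : ℕ) ∧ (i : ℕ) ≤ k then min (t - x i) 0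
      else if k + 1 ≤ (i : ℕ) ∧ (i : ℕ) ≤ n - 2 then min (x i - t) 0
      else 0 with hφdef
    have hS : Convex ℝ (Set.Icc (x ⟨0, by omega⟩) (x ⟨n - 1, by omega⟩)) :=
      convex_Icc _ _
    refine ⟨fun t => (lp - lm) * t + ∑ i : Fin n, w i * φ i t, ?_, ?_, ?_, ?_⟩
    · refine ConcaveOn.add (aux_affine_concave hS (lp - lm))
        (aux_concaveOn_sum hS Finset.univ (fun i t => w i * φ i t) ?_)
      intro i _
      simp only [hφdef]
      split_ifs with h1 h2
      · exact aux_smul_concave (hw i) (aux_min_left hS (x i))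
      · exact aux_smul_concave (hw i) (aux_min_right hS (x i))
      · exact aux_smul_concave (hw i) (concaveOn_const (0 : ℝ) hS)
    · intro i
      set α : Fin n → ℝ := fun i' =>
        if 1 ≤ (i' : ℕ) ∧ (i' : ℕ) ≤ k then (if (i : ℕ) + 1 ≤ (i' : ℕ) then 1 else 0)
        else if k + 1 ≤ (i' : ℕ) ∧ (i' : ℕ) ≤ n - 2 then
          (if (i' : ℕ) ≤ (i : ℕ) then -1 else 0)
        else 0 with hαdef
      set β : Fin n → ℝ := fun i' =>
        if 1 ≤ (i' : ℕ) ∧ (i' : ℕ) ≤ k then (if (i : ℕ) + 1 ≤ (i' : ℕ) then -(x i') else 0)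
        else if k + 1 ≤ (i' : ℕ) ∧ (i' : ℕ) ≤ n - 2 then
          (if (i' : ℕ) ≤ (i : ℕ) then x i' else 0)
        else 0 with hβdef
      refine ⟨(lp - lm) + ∑ i' : Fin n, w i' * α i', ∑ i' : Fin n, w i' * β i', ?_⟩
      intro t ht
      obtain ⟨ht1, ht2⟩ := ht
      have hub : ∀ i' : Fin n, (i : ℕ) + 1 ≤ (i' : ℕ) → t ≤ x i' := by
        intro i' h
        refine le_trans ht2 (hx.monotone ?_)
        show ((⟨(i : ℕ) + 1, by omega⟩ : Fin n)) ≤ i'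
        rw [Fin.le_def]
        exact h
      have hlb : ∀ i' : Fin n, (i' : ℕ) ≤ (i : ℕ) → x i' ≤ t := by
        intro i' h
        refine le_trans (hx.monotone ?_) ht1
        show i' ≤ (⟨(i : ℕ), by omega⟩ : Fin n)
        rw [Fin.le_def]
        exact h
      have peri : ∀ i' : Fin n, w i' * φ i' t = w i' * α i' * t + w i' * β i' := by
        intro i'
        simp only [hφdef, hαdef, hβdef]
        by_cases h1 : 1 ≤ (i' : ℕ) ∧ (i' : ℕ) ≤ k
        · rw [if_pos h1, if_pos h1, if_pos h1]
          by_cases h2 : (i : ℕ) + 1 ≤ (i' : ℕ)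
          · rw [if_pos h2, if_pos h2, min_eq_left (sub_nonpos.mpr (hub i' h2))]; ring
          · rw [if_neg h2, if_neg h2,
              min_eq_right (sub_nonneg.mpr (hlb i' (by omega)))]; ring
        · rw [if_neg h1, if_neg h1, if_neg h1]
          by_cases h2 : k + 1 ≤ (i' : ℕ) ∧ (i' : ℕ) ≤ n - 2
          · rw [if_pos h2, if_pos h2, if_pos h2]
            by_cases h3 : (i' : ℕ) ≤ (i : ℕ)
            · rw [if_pos h3, if_pos h3, min_eq_left (sub_nonpos.mpr (hlb i' h3))]; ring
            · rw [if_neg h3, if_neg h3,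
                min_eq_right (sub_nonneg.mpr (hub i' (by omega)))]; ring
          · rw [if_neg h2, if_neg h2, if_neg h2]; ring
      show (lp - lm) * t + (∑ i' : Fin n, w i' * φ i' t)
          = ((lp - lm) + ∑ i' : Fin n, w i' * α i') * t + ∑ i' : Fin n, w i' * β i'
      rw [Finset.sum_congr rfl fun i' _ => peri i', Finset.sum_add_distrib,
        ← Finset.sum_mul]
      ring
    · show (lp - lm) * 0 + (∑ i : Fin n, w i * φ i 0) = 0
      have hz : ∀ i ∈ Finset.univ, w i * φ i 0 = (0 : ℝ) := by
        intro i _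
        simp only [hφdef]
        by_cases h1 : 1 ≤ (i : ℕ) ∧ (i : ℕ) ≤ k
        · rw [if_pos h1]
          have h5 : x i ≤ x k0 := hx.monotone (by rw [Fin.le_def]; omega)
          rw [hk0] at h5
          rw [min_eq_right (by linarith), mul_zero]
        · rw [if_neg h1]
          by_cases h2 : k + 1 ≤ (i : ℕ) ∧ (i : ℕ) ≤ n - 2
          · rw [if_pos h2]
            have h5 : x k0 < x i := hx (by rw [Fin.lt_def]; omega)
            rw [hk0] at h5
            rw [min_eq_right (by linarith), mul_zero]
          · rw [if_neg h2, mul_zero]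
      rw [Finset.sum_eq_zero hz]
      ring
    · funext j
      have peri : ∀ i : Fin n, w i * φ i (x j)
          = w i * (if 1 ≤ (i : ℕ) ∧ (i : ℕ) ≤ k then
              (if (j : ℕ) ≤ (i : ℕ) then x j - x i else 0)
            else if k + 1 ≤ (i : ℕ) ∧ (i : ℕ) ≤ n - 2 then
              (if (i : ℕ) ≤ (j : ℕ) then x i - x j else 0)
            else 0) := by
        intro i
        simp only [hφdef]
        by_cases h1 : 1 ≤ (i : ℕ) ∧ (i : ℕ) ≤ k
        · rw [if_pos h1, if_pos h1]
          by_cases h2 : (j : ℕ) ≤ (i : ℕ)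
          · rw [if_pos h2,
              min_eq_left (sub_nonpos.mpr (hx.monotone (show j ≤ i by
                rw [Fin.le_def]; exact h2)))]
          · rw [if_neg h2,
              min_eq_right (sub_nonneg.mpr (hx.monotone (show i ≤ j by
                rw [Fin.le_def]; omega)))]
        · rw [if_neg h1, if_neg h1]
          by_cases h2 : k + 1 ≤ (i : ℕ) ∧ (i : ℕ) ≤ n - 2
          · rw [if_pos h2, if_pos h2]
            by_cases h3 : (i : ℕ) ≤ (j : ℕ)
            · rw [if_pos h3,
                min_eq_left (sub_nonpos.mpr (hx.monotone (show i ≤ j by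
                  rw [Fin.le_def]; exact h3)))]
            · rw [if_neg h3,
                min_eq_right (sub_nonneg.mpr (hx.monotone (show j ≤ i by
                  rw [Fin.le_def]; omega)))]
          · rw [if_neg h2, if_neg h2]
      show lp * x j + lm * (-(x j)) + (∑ i : Fin n, w i *
          (if 1 ≤ (i : ℕ) ∧ (i : ℕ) ≤ k then
              (if (j : ℕ) ≤ (i : ℕ) then x j - x i else 0)
            else if k + 1 ≤ (i : ℕ) ∧ (i : ℕ) ≤ n - 2 then
              (if (i : ℕ) ≤ (j : ℕ) then x i - x j else 0)
            else 0))
          = (lp - lm) * x j + ∑ i : Fin n, w i * φ i (x j)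
      rw [Finset.sum_congr rfl fun i _ => peri i]
      ring
end

section
/- Let M > 0 and c > 0. The set of concave functions r : [−c, c] → ℝ with r(0) = 0, r ≤ M, and r(±c) ≥ k (for fixed k < 0) is compact under pointwise convergence, and any functional of the form r ↦ (1/2)∫_{−c}^c r² du − ∫_{−c}^c r g du with g bounded and measurable attains its minimum on this set. -/
/-!
The admissible set is cut out of the product `∏ᵤ [k, M]` by pointwise conditions (concavity
included), so it is compact by Tychonoff. A concave function is continuous on the open interval,
hence determined by its values on the rationals and at `±c`; restriction to this countable set
embeds the compact admissible set into a metrizable space, so it is metrizable and its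
neighbourhood filters are countably generated. Dominated convergence with the constant bound
`max |k| |M|` then makes the functional continuous, and it attains its minimum on the compact set.
-/

open MeasureTheory Set Filter Topology
open scoped Interval

def concaveProfiles (c M k : ℝ) : Set (ℝ → ℝ) :=
  {r | ConcaveOn ℝ (Icc (-c) c) r ∧ r 0 = 0 ∧
    (∀ u ∈ Icc (-c) c, r u ≤ M) ∧ k ≤ r (-c) ∧ k ≤ r c ∧
    (∀ u ∉ Icc (-c) c, r u = 0)}

noncomputable def energy (a b : ℝ) (g r : ℝ → ℝ) : ℝ :=
  (1 / 2) * (∫ u in a..b, r u ^ 2) - ∫ u in a..b, r u * g u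

lemma ConcaveOn.aestronglyMeasurable_uIoc {a b : ℝ} {f : ℝ → ℝ} (hab : a ≤ b)
    (hf : ConcaveOn ℝ (Icc a b) f) : AEStronglyMeasurable f (volume.restrict (Ι a b)) := by
  rw [uIoc_of_le hab, ← Measure.restrict_congr_set Ioo_ae_eq_Ioc]
  exact (interior_Icc (a := a) (b := b) ▸ hf.continuousOn_interior).aestronglyMeasurable
    measurableSet_Ioo

lemma ConcaveOn.eqOn_Icc_of_eqOn_dense {a b : ℝ} {f g : ℝ → ℝ} {D : Set ℝ}
    (hf : ConcaveOn ℝ (Icc a b) f) (hg : ConcaveOn ℝ (Icc a b) g) (hD : Dense D)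
    (hfg : EqOn f g D) (ha : f a = g a) (hb : f b = g b) : EqOn f g (Icc a b) := by
  have hIoo : EqOn f g (Ioo a b) :=
    (hfg.mono inter_subset_right).of_subset_closure
      (interior_Icc (a := a) (b := b) ▸ hf.continuousOn_interior)
      (interior_Icc (a := a) (b := b) ▸ hg.continuousOn_interior)
      inter_subset_left (hD.open_subset_closure_inter isOpen_Ioo)
  intro u hu
  rcases eq_endpoints_or_mem_Ioo_of_mem_Icc hu with rfl | rfl | hu
  exacts [ha, hb, hIoo hu]

lemma tendsto_energy {ι : Type*} {l : Filter ι} [l.IsCountablyGenerated] {a b B C : ℝ}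
    {g : ℝ → ℝ} (hg : AEStronglyMeasurable g (volume.restrict (Ι a b)))
    (hgB : ∀ u, |g u| ≤ B) {r : ι → ℝ → ℝ} {r₀ : ℝ → ℝ}
    (hr : ∀ i, AEStronglyMeasurable (r i) (volume.restrict (Ι a b)))
    (hrC : ∀ i u, |r i u| ≤ C) (hlim : ∀ u, Tendsto (fun i => r i u) l (𝓝 (r₀ u))) :
    Tendsto (fun i => energy a b g (r i)) l (𝓝 (energy a b g r₀)) := by
  have hsq : Tendsto (fun i => ∫ u in a..b, r i u ^ 2) l (𝓝 (∫ u in a..b, r₀ u ^ 2)) := by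
    refine intervalIntegral.tendsto_integral_filter_of_dominated_convergence (fun _ => C ^ 2)
      (.of_forall fun i => (hr i).pow 2) (.of_forall fun i => ae_of_all _ fun u _ => ?_)
      intervalIntegrable_const (ae_of_all _ fun u _ => (hlim u).pow 2)
    rw [Real.norm_eq_abs, abs_pow]
    exact pow_le_pow_left₀ (abs_nonneg _) (hrC i u) 2
  have hmul : Tendsto (fun i => ∫ u in a..b, r i u * g u) l
      (𝓝 (∫ u in a..b, r₀ u * g u)) := by
    refine intervalIntegral.tendsto_integral_filter_of_dominated_convergence (fun _ => C * B)
      (.of_forall fun i => (hr i).mul hg) (.of_forall fun i => ae_of_all _ fun u _ => ?_)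
      intervalIntegrable_const (ae_of_all _ fun u _ => (hlim u).mul_const (g u))
    rw [Real.norm_eq_abs, abs_mul]
    exact mul_le_mul (hrC i u) (hgB u) (abs_nonneg _) ((abs_nonneg _).trans (hrC i u))
  exact (hsq.const_mul _).sub hmul

section concaveProfiles

variable {c M k : ℝ}

lemma zero_mem_concaveProfiles (hM : 0 ≤ M) (hk : k ≤ 0) : 0 ∈ concaveProfiles c M k :=
  ⟨concaveOn_const 0 (convex_Icc _ _), rfl, fun _ _ => hM, hk, hk, fun _ _ => rfl⟩

lemma concaveProfiles_subset_pi (hM : 0 ≤ M) (hk : k ≤ 0) :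
    concaveProfiles c M k ⊆ univ.pi fun _ => Icc k M := by
  rintro r ⟨hconc, -, hle, hkl, hkr, hout⟩ u -
  by_cases hu : u ∈ Icc (-c) c
  · have hc : -c ≤ c := hu.1.trans hu.2
    exact ⟨le_min hkl hkr |>.trans <| hconc.min_le_of_mem_Icc (left_mem_Icc.2 hc)
      (right_mem_Icc.2 hc) hu, hle u hu⟩
  · rw [hout u hu]
    exact ⟨hk, hM⟩

lemma isClosed_concaveProfiles : IsClosed (concaveProfiles c M k) := by
  simp only [concaveProfiles, ofPred_and, ofPred_forall]
  refine isClosed_setOfPred_concaveOn.inter <| (isClosed_eq (by fun_prop) (by fun_prop)).inter <|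
    (isClosed_iInter fun u => isClosed_iInter fun _ =>
      isClosed_le (by fun_prop) (by fun_prop)).inter <|
    (isClosed_le (by fun_prop) (by fun_prop)).inter <|
    (isClosed_le (by fun_prop) (by fun_prop)).inter <|
    isClosed_iInter fun u => isClosed_iInter fun _ => isClosed_eq (by fun_prop) (by fun_prop)

lemma isCompact_concaveProfiles (hM : 0 ≤ M) (hk : k ≤ 0) :
    IsCompact (concaveProfiles c M k) :=
  (isCompact_univ_pi fun _ => isCompact_Icc).of_isClosed_subset isClosed_concaveProfiles
    (concaveProfiles_subset_pi hM hk)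

lemma eq_of_eqOn_of_mem_concaveProfiles {r r' : ℝ → ℝ} (hr : r ∈ concaveProfiles c M k)
    (hr' : r' ∈ concaveProfiles c M k)
    (h : EqOn r r' (insert (-c) (insert c (range ((↑) : ℚ → ℝ))))) : r = r' := by
  funext u
  by_cases hu : u ∈ Icc (-c) c
  · exact hr.1.eqOn_Icc_of_eqOn_dense hr'.1 Rat.denseRange_cast
      (h.mono ((subset_insert _ _).trans (subset_insert _ _))) (h (mem_insert _ _))
      (h (mem_insert_of_mem _ (mem_insert _ _))) hu
  · rw [hr.2.2.2.2.2 u hu, hr'.2.2.2.2.2 u hu]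

lemma metrizableSpace_concaveProfiles (hM : 0 ≤ M) (hk : k ≤ 0) :
    TopologicalSpace.MetrizableSpace (concaveProfiles c M k) := by
  set D : Set ℝ := insert (-c) (insert c (range ((↑) : ℚ → ℝ)))
  have : Countable D := (((countable_range _).insert _).insert _).to_subtype
  have : CompactSpace (concaveProfiles c M k) :=
    isCompact_iff_compactSpace.mp (isCompact_concaveProfiles hM hk)
  have hcont : Continuous fun (r : concaveProfiles c M k) (x : D) => r.1 x :=
    continuous_pi fun x => (continuous_apply x.1).comp continuous_subtype_val
  have hinj : Function.Injective fun (r : concaveProfiles c M k) (x : D) => r.1 x :=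
    fun r r' h => Subtype.ext <|
      eq_of_eqOn_of_mem_concaveProfiles r.2 r'.2 fun u hu => congrFun h ⟨u, hu⟩
  exact (hcont.isClosedEmbedding hinj).isEmbedding.metrizableSpace

lemma continuousOn_energy_concaveProfiles (hc : 0 ≤ c) (hM : 0 ≤ M) (hk : k ≤ 0)
    {g : ℝ → ℝ} (hg : Measurable g) {B : ℝ} (hgB : ∀ u, |g u| ≤ B) :
    ContinuousOn (energy (-c) c g) (concaveProfiles c M k) := by
  have := metrizableSpace_concaveProfiles (c := c) hM hk
  rw [continuousOn_iff_continuous_domRestrict, continuous_iff_continuousAt]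
  intro p
  have hbound (r : concaveProfiles c M k) (u : ℝ) : |r.1 u| ≤ max |k| |M| :=
    have hu := concaveProfiles_subset_pi hM hk r.2 u (mem_univ u)
    abs_le_max_abs_abs hu.1 hu.2
  exact tendsto_energy hg.aestronglyMeasurable hgB
    (fun r => r.2.1.aestronglyMeasurable_uIoc (by linarith)) hbound
    (fun u => ((continuous_apply u).comp continuous_subtype_val).tendsto p)

end concaveProfiles

/-- The set of concave functions r on [−c,c] with r(0) = 0, r ≤ M, r(±c) ≥ k
(extended by 0 outside [−c,c]) is compact under pointwise convergence, and any
functional r ↦ (1/2)∫ r² − ∫ r·g with g bounded measurable attains its minimum on it. -/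
theorem stmt_10 (c M k : ℝ) (hc : 0 < c) (hM : 0 < M) (hk : k < 0) :
    letI S : Set (ℝ → ℝ) :=
      {r | ConcaveOn ℝ (Set.Icc (-c) c) r ∧ r 0 = 0 ∧
        (∀ u ∈ Set.Icc (-c) c, r u ≤ M) ∧ k ≤ r (-c) ∧ k ≤ r c ∧
        (∀ u ∉ Set.Icc (-c) c, r u = 0)}
    IsCompact S ∧
      ∀ g : ℝ → ℝ, Measurable g → (∃ B : ℝ, ∀ u, |g u| ≤ B) →
        ∃ r₀ ∈ S, ∀ r ∈ S,
          (1 / 2) * (∫ u in (-c)..c, (r₀ u) ^ 2) - (∫ u in (-c)..c, r₀ u * g u)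
            ≤ (1 / 2) * (∫ u in (-c)..c, (r u) ^ 2) - (∫ u in (-c)..c, r u * g u) := by
  have hS : IsCompact (concaveProfiles c M k) := isCompact_concaveProfiles hM.le hk.le
  refine ⟨hS, fun g hg ⟨B, hgB⟩ => ?_⟩
  obtain ⟨r₀, hr₀, hmin⟩ := hS.exists_isMinOn ⟨0, zero_mem_concaveProfiles hM.le hk.le⟩
    (continuousOn_energy_concaveProfiles hc.le hM.le hk.le hg hgB)
  exact ⟨r₀, hr₀, fun r hr => hmin hr⟩
end

section
/- Integration by parts for bounded variation functions: if F and G are of bounded variation on [a, b] with −∞ < a < b < ∞, and at least one of F, G is continuous, then ∫_{(a,b]} F dG + ∫_{(a,b]} G dF = F(b)G(b) − F(a)G(a). -/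
/-!
Split the square `(a, b]²` along the diagonal into `{y ≤ x}` and `{x < y}` and compute the
`df ⊗ dg`-measure of each piece by integrating its sections (Tonelli). For Stieltjes functions
`f`, `g` this gives `∫ g df + ∫ f(y-) dg = f(b) g(b) - f(a) g(a)`; the left limit appears because
the sections `(a, y)` of the strict triangle are open on the right. The identity is bilinear, so it
passes to differences of Stieltjes functions. If `F` is continuous on `[a, b]`, its left limits
agree with its values on `(a, b]`; if instead `G` is, exchange the roles of `F` and `G`.
-/

open MeasureTheory Set Function

theorem Monotone.integrableOn_Ioc {μ : Measure ℝ} [IsLocallyFiniteMeasure μ] {h : ℝ → ℝ}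
    (hh : Monotone h) (a b : ℝ) : IntegrableOn h (Ioc a b) μ :=
  (hh.locallyIntegrable.integrableOn_isCompact isCompact_Icc).mono_set Ioc_subset_Icc_self

theorem lintegral_measure_Ioc_add_lintegral_measure_Ioo (μ ν : Measure ℝ) [SFinite μ]
    [SFinite ν] (a b : ℝ) :
    ∫⁻ x in Ioc a b, ν (Ioc a x) ∂μ + ∫⁻ y in Ioc a b, μ (Ioo a y) ∂ν
      = μ (Ioc a b) * ν (Ioc a b) := by
  set A : Set (ℝ × ℝ) := {p | p.2 ∈ Ioc a p.1 ∧ p.1 ≤ b}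
  set B : Set (ℝ × ℝ) := {p | p.1 ∈ Ioo a p.2 ∧ p.2 ≤ b}
  have hA : MeasurableSet A := by unfold A; measurability
  have hB : MeasurableSet B := by unfold B; measurability
  have hAB : Disjoint A B := by
    rw [Set.disjoint_left]; rintro p ⟨⟨-, h⟩, -⟩ ⟨⟨-, h'⟩, -⟩; exact h'.not_ge h
  have hunion : A ∪ B = Ioc a b ×ˢ Ioc a b := by
    ext ⟨x, y⟩
    simp only [A, B, mem_union, mem_ofPred_eq, mem_prod, mem_Ioc, mem_Ioo]
    constructor
    · rintro (h | h) <;> refine ⟨⟨?_, ?_⟩, ?_, ?_⟩ <;> linarith [h.1.1, h.1.2, h.2]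
    · rintro ⟨hx, hy⟩
      rcases le_or_gt y x with h | h
      · exact Or.inl ⟨⟨hy.1, h⟩, hx.2⟩
      · exact Or.inr ⟨⟨hx.1, h⟩, hy.2⟩
  have hAval : μ.prod ν A = ∫⁻ x in Ioc a b, ν (Ioc a x) ∂μ := by
    rw [Measure.prod_apply hA, ← lintegral_indicator measurableSet_Ioc]
    congr 1; ext x
    by_cases hx : x ∈ Ioc a b
    · rw [indicator_of_mem hx]; congr 1; ext y
      simp only [A, mem_preimage, mem_ofPred_eq, and_iff_left hx.2]
    · rw [indicator_of_notMem hx, ← measure_empty (μ := ν)]; congr 1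
      ext y; simp only [A, mem_preimage, mem_ofPred_eq, mem_Ioc, mem_empty_iff_false, iff_false]
      rintro ⟨⟨h1, h2⟩, h3⟩; exact hx ⟨h1.trans_le h2, h3⟩
  have hBval : μ.prod ν B = ∫⁻ y in Ioc a b, μ (Ioo a y) ∂ν := by
    rw [Measure.prod_apply_symm hB, ← lintegral_indicator measurableSet_Ioc]
    congr 1; ext y
    by_cases hy : y ∈ Ioc a b
    · rw [indicator_of_mem hy]; congr 1; ext x
      simp only [B, mem_preimage, mem_ofPred_eq, and_iff_left hy.2]
    · rw [indicator_of_notMem hy, ← measure_empty (μ := μ)]; congr 1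
      ext x; simp only [B, mem_preimage, mem_ofPred_eq, mem_Ioo, mem_empty_iff_false, iff_false]
      rintro ⟨⟨h1, h2⟩, h3⟩; exact hy ⟨h1.trans h2, h3⟩
  rw [← hAval, ← hBval, ← measure_union hAB hB, hunion, Measure.prod_prod]

namespace StieltjesFunction

theorem measureReal_Ioc_of_le (f : StieltjesFunction ℝ) {a b : ℝ} (hab : a ≤ b) :
    f.measure.real (Ioc a b) = f b - f a := by
  rw [measureReal_def, measure_Ioc, ENNReal.toReal_ofReal (sub_nonneg.2 (f.mono hab))]

theorem setIntegral_Ioc_sub_const {f : StieltjesFunction ℝ} {h : ℝ → ℝ} (hh : Monotone h)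
    {a b : ℝ} (hab : a ≤ b) (c : ℝ) :
    ∫ x in Ioc a b, (h x - c) ∂f.measure = ∫ x in Ioc a b, h x ∂f.measure - c * (f b - f a) := by
  rw [integral_sub (hh.integrableOn_Ioc a b) (monotone_const.integrableOn_Ioc a b),
    setIntegral_const, f.measureReal_Ioc_of_le hab, smul_eq_mul, mul_comm]

theorem integral_add_integral_leftLim (f g : StieltjesFunction ℝ) {a b : ℝ} (hab : a ≤ b) :
    ∫ x in Ioc a b, g x ∂f.measure + ∫ x in Ioc a b, leftLim f x ∂g.measure
      = f b * g b - f a * g a := by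
  have hg : Monotone fun x => g x - g a := fun x y hxy => sub_le_sub_right (g.mono hxy) _
  have hf : Monotone fun x => leftLim f x - f a :=
    fun x y hxy => sub_le_sub_right (f.mono.leftLim hxy) _
  have hg₀ : 0 ≤ᵐ[f.measure.restrict (Ioc a b)] fun x => g x - g a :=
    ae_restrict_of_forall_mem measurableSet_Ioc fun x hx => sub_nonneg.2 (g.mono hx.1.le)
  have hf₀ : 0 ≤ᵐ[g.measure.restrict (Ioc a b)] fun x => leftLim f x - f a :=
    ae_restrict_of_forall_mem measurableSet_Ioc fun x hx => sub_nonneg.2 (f.mono.le_leftLim hx.1)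
  have key := lintegral_measure_Ioc_add_lintegral_measure_Ioo f.measure g.measure a b
  simp only [measure_Ioc, measure_Ioo] at key
  rw [← ofReal_integral_eq_lintegral_ofReal (hg.integrableOn_Ioc a b) hg₀,
    ← ofReal_integral_eq_lintegral_ofReal (hf.integrableOn_Ioc a b) hf₀,
    ← ENNReal.ofReal_add (integral_nonneg_of_ae hg₀) (integral_nonneg_of_ae hf₀),
    ← ENNReal.ofReal_mul (sub_nonneg.2 (f.mono hab)),
    ENNReal.ofReal_eq_ofReal_iff (add_nonneg (integral_nonneg_of_ae hg₀)
      (integral_nonneg_of_ae hf₀)) (mul_nonneg (sub_nonneg.2 (f.mono hab))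
      (sub_nonneg.2 (g.mono hab))),
    setIntegral_Ioc_sub_const g.mono hab, setIntegral_Ioc_sub_const f.mono.leftLim hab] at key
  linarith

theorem leftLim_sub_leftLim_of_continuousWithinAt (f₁ f₂ : StieltjesFunction ℝ) {y : ℝ}
    (hc : ContinuousWithinAt (fun x => f₁ x - f₂ x) (Iio y) y) :
    leftLim f₁ y - leftLim f₂ y = f₁ y - f₂ y :=
  tendsto_nhds_unique ((f₁.mono.tendsto_leftLim y).sub (f₂.mono.tendsto_leftLim y)) hc

theorem integral_sub_add_integral_leftLim_sub (f₁ f₂ g₁ g₂ : StieltjesFunction ℝ) {a b : ℝ}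
    (hab : a ≤ b) :
    (∫ x in Ioc a b, (g₁ x - g₂ x) ∂f₁.measure - ∫ x in Ioc a b, (g₁ x - g₂ x) ∂f₂.measure)
      + (∫ x in Ioc a b, (leftLim f₁ x - leftLim f₂ x) ∂g₁.measure
        - ∫ x in Ioc a b, (leftLim f₁ x - leftLim f₂ x) ∂g₂.measure)
      = (f₁ b - f₂ b) * (g₁ b - g₂ b) - (f₁ a - f₂ a) * (g₁ a - g₂ a) := by
  simp only [integral_sub (g₁.mono.integrableOn_Ioc a b) (g₂.mono.integrableOn_Ioc a b),
    integral_sub (f₁.mono.leftLim.integrableOn_Ioc a b) (f₂.mono.leftLim.integrableOn_Ioc a b)]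
  linarith [integral_add_integral_leftLim f₁ g₁ hab, integral_add_integral_leftLim f₁ g₂ hab,
    integral_add_integral_leftLim f₂ g₁ hab, integral_add_integral_leftLim f₂ g₂ hab]

theorem integral_add_integral_of_continuousOn {f₁ f₂ g₁ g₂ : StieltjesFunction ℝ} {F G : ℝ → ℝ}
    (hF : ∀ x, F x = f₁ x - f₂ x) (hG : ∀ x, G x = g₁ x - g₂ x) {a b : ℝ} (hab : a ≤ b)
    (hc : ContinuousOn F (Icc a b)) :
    ((∫ x in Ioc a b, F x ∂g₁.measure) - (∫ x in Ioc a b, F x ∂g₂.measure))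
      + ((∫ x in Ioc a b, G x ∂f₁.measure) - (∫ x in Ioc a b, G x ∂f₂.measure))
      = F b * G b - F a * G a := by
  obtain rfl : F = fun x => f₁ x - f₂ x := funext hF
  obtain rfl : G = fun x => g₁ x - g₂ x := funext hG
  have hleft : EqOn (fun x => leftLim f₁ x - leftLim f₂ x) (fun x => f₁ x - f₂ x) (Ioc a b) :=
    fun y hy => leftLim_sub_leftLim_of_continuousWithinAt f₁ f₂
      ((hc y (Ioc_subset_Icc_self hy)).mono_of_mem_nhdsWithin (Icc_mem_nhdsLT_of_mem hy))
  rw [← setIntegral_congr_fun measurableSet_Ioc hleft,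
    ← setIntegral_congr_fun measurableSet_Ioc hleft, add_comm]
  exact integral_sub_add_integral_leftLim_sub f₁ f₂ g₁ g₂ hab

end StieltjesFunction

theorem stmt_14_general (a b : ℝ) (hab : a < b)
    (f₁ f₂ g₁ g₂ : StieltjesFunction ℝ) (F G : ℝ → ℝ)
    (hF : ∀ x, F x = f₁ x - f₂ x) (hG : ∀ x, G x = g₁ x - g₂ x)
    (hcont : ContinuousOn F (Set.Icc a b) ∨ ContinuousOn G (Set.Icc a b)) :
    ((∫ x in Set.Ioc a b, F x ∂g₁.measure) - (∫ x in Set.Ioc a b, F x ∂g₂.measure))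
      + ((∫ x in Set.Ioc a b, G x ∂f₁.measure) - (∫ x in Set.Ioc a b, G x ∂f₂.measure))
      = F b * G b - F a * G a := by
  rcases hcont with hc | hc
  · exact StieltjesFunction.integral_add_integral_of_continuousOn hF hG hab.le hc
  · linarith [StieltjesFunction.integral_add_integral_of_continuousOn hG hF hab.le hc,
      mul_comm (F a) (G a), mul_comm (F b) (G b)]

/-- Integration by parts for Lebesgue–Stieltjes integrals: if F and G are of bounded
variation on [a,b] (written as differences of Stieltjes functions, which carry the
associated Lebesgue–Stieltjes measures) and at least one of them is continuous on [a,b],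
then ∫_{(a,b]} F dG + ∫_{(a,b]} G dF = F(b)G(b) − F(a)G(a). -/
theorem stmt_14 (a b : ℝ) (hab : a < b)
    (f₁ f₂ g₁ g₂ : StieltjesFunction ℝ) (F G : ℝ → ℝ)
    (hF : ∀ x, F x = f₁ x - f₂ x) (hG : ∀ x, G x = g₁ x - g₂ x)
    (hFbv : BoundedVariationOn F (Set.Icc a b))
    (hGbv : BoundedVariationOn G (Set.Icc a b))
    (hcont : ContinuousOn F (Set.Icc a b) ∨ ContinuousOn G (Set.Icc a b)) :
    ((∫ x in Set.Ioc a b, F x ∂g₁.measure) - (∫ x in Set.Ioc a b, F x ∂g₂.measure))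
      + ((∫ x in Set.Ioc a b, G x ∂f₁.measure) - (∫ x in Set.Ioc a b, G x ∂f₂.measure))
      = F b * G b - F a * G a :=
  stmt_14_general a b hab f₁ f₂ g₁ g₂ F G hF hG hcont
end
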